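/- arXiv:2507.01637 — 3 statements merged into one kernel-verified Lean document; each statement's English description precedes it below -/
import Mathlib

section
/- The groupoid cardinality of the action groupoid F ⫽ G of a finite group G acting on a finite set F equals |F| / |G|, where groupoid cardinality is the sum over isomorphism classes of objects of the reciprocals of the orders of the automorphism groups. -/
open CategoryTheory MulAction

/-- Groupoid cardinality: sum over isomorphism classes of the reciprocal of the
order of the automorphism group. -/
noncomputable def gpdCard (X : Type*) [Groupoid X] : ℚ :=
  ∑ᶠ c : Quotient (isIsomorphicSetoid X),
    (1 : ℚ) / Nat.card (Quotient.out c ⟶ Quotient.out c)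

/-- The action groupoid `F ⫽ G`: objects are elements of `F`, morphisms `x ⟶ y`
are group elements `g` with `g • x = y`. -/
def ActionGpd (G F : Type*) [Group G] [MulAction G F] := F

/-- The element of `F` underlying an object of the action groupoid. -/
def ActionGpd.pt {G F : Type*} [Group G] [MulAction G F] (x : ActionGpd G F) : F := x

/-- The object of the action groupoid corresponding to an element of `F`. -/
def ActionGpd.mk' (G : Type*) {F : Type*} [Group G] [MulAction G F] (x : F) :
    ActionGpd G F := x

instance (G F : Type*) [Group G] [MulAction G F] : Groupoid (ActionGpd G F) where
  Hom x y := {g : G // g • x.pt = y.pt}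
  id x := ⟨1, one_smul _ _⟩
  comp {x y z} f g := ⟨g.1 * f.1, by rw [mul_smul, f.2, g.2]⟩
  id_comp := by intros; apply Subtype.ext; simp
  comp_id := by intros; apply Subtype.ext; simp
  assoc := by intros; apply Subtype.ext; simp [mul_assoc]
  inv {x y} f := ⟨f.1⁻¹, inv_smul_eq_iff.mpr f.2.symm⟩
  inv_comp := by intros; apply Subtype.ext; simp
  comp_inv := by intros; apply Subtype.ext; simp

/-- The free loop groupoid `ΛX` of a groupoid `X`: objects are pairs `(x, γ)`
with `γ : x ⟶ x`; morphisms `(x, γ) ⟶ (y, δ)` are `f : x ⟶ y` with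
`γ ≫ f = f ≫ δ`. -/
structure LoopGpd (X : Type*) [Groupoid X] where
  pt : X
  loop : pt ⟶ pt

instance (X : Type*) [Groupoid X] : Groupoid (LoopGpd X) where
  Hom a b := {f : a.pt ⟶ b.pt // a.loop ≫ f = f ≫ b.loop}
  id a := ⟨𝟙 _, by simp⟩
  comp {a b c} f g := ⟨f.1 ≫ g.1, by
    rw [← Category.assoc, f.2, Category.assoc, g.2, Category.assoc]⟩
  id_comp := by intros; apply Subtype.ext; simp
  comp_id := by intros; apply Subtype.ext; simp
  assoc := by intros; apply Subtype.ext; simp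
  inv {a b} f := ⟨Groupoid.inv f.1, by
    rw [Groupoid.inv_eq_inv, IsIso.eq_inv_comp, ← Category.assoc, ← f.2,
      Category.assoc, IsIso.hom_inv_id, Category.comp_id]⟩
  inv_comp := by intros; apply Subtype.ext; simp
  comp_inv := by intros; apply Subtype.ext; simp

/-!
Isomorphism classes of objects of `F ⫽ G` are the `G`-orbits, and the automorphism group of `x`
is its stabilizer. By orbit–stabilizer, `1 / |Stab x| = |G • x| / |G|`, and summing over the
orbits, which partition `F`, gives `|F| / |G|`.
-/

namespace MulAction

variable {G F : Type*} [Group G] [MulAction G F]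

theorem card_orbit_mul_card_stabilizer (x : F) :
    Nat.card (orbit G x) * Nat.card (stabilizer G x) = Nat.card G := by
  rw [Nat.card_coe_set_eq, ← index_stabilizer, Subgroup.index_mul_card]

theorem one_div_card_stabilizer [Finite G] (x : F) :
    (1 : ℚ) / Nat.card (stabilizer G x) = Nat.card (orbit G x) / Nat.card G := by
  have hG : (Nat.card G : ℚ) ≠ 0 := Nat.cast_ne_zero.mpr Nat.card_pos.ne'
  have hS : (Nat.card (stabilizer G x) : ℚ) ≠ 0 := Nat.cast_ne_zero.mpr Nat.card_pos.ne'
  rw [div_eq_div_iff hS hG, one_mul, ← card_orbit_mul_card_stabilizer x, Nat.cast_mul]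

theorem sum_card_orbit_out [Finite F] [Fintype (orbitRel.Quotient G F)] :
    ∑ ω : orbitRel.Quotient G F, Nat.card (orbit G ω.out) = Nat.card F := by
  rw [← Nat.card_sigma, Nat.card_congr (selfEquivSigmaOrbits G F)]

theorem finsum_one_div_card_stabilizer_out [Finite G] [Finite F] :
    ∑ᶠ ω : orbitRel.Quotient G F, (1 : ℚ) / Nat.card (stabilizer G ω.out) =
      Nat.card F / Nat.card G := by
  have := Fintype.ofFinite (orbitRel.Quotient G F)
  rw [finsum_eq_sum_of_fintype, ← sum_card_orbit_out (G := G), Nat.cast_sum, Finset.sum_div]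
  exact Finset.sum_congr rfl fun ω _ => one_div_card_stabilizer ω.out

end MulAction

namespace ActionGpd

variable (G F : Type*) [Group G] [MulAction G F]

theorem isIsomorphicSetoid_eq_orbitRel :
    isIsomorphicSetoid (ActionGpd G F) = (orbitRel G F : Setoid F) := by
  refine Setoid.ext fun (a b : F) => ⟨fun ⟨i⟩ => ⟨i.inv.1, i.inv.2⟩, ?_⟩
  rintro ⟨g, rfl⟩
  exact ⟨(asIso (show mk' G b ⟶ mk' G (g • b) from ⟨g, rfl⟩)).symm⟩

theorem card_end (x : ActionGpd G F) : Nat.card (x ⟶ x) = Nat.card (stabilizer G x.pt) := rfl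

end ActionGpd

/-- The groupoid cardinality of the action groupoid `F ⫽ G` of a finite group
`G` acting on a finite set `F` is `|F| / |G|`. -/
theorem gpdCard_actionGpd (G F : Type*) [Group G] [Fintype G] [Fintype F]
    [MulAction G F] :
    gpdCard (ActionGpd G F) = (Nat.card F : ℚ) / (Nat.card G : ℚ) := by
  rw [gpdCard, ActionGpd.isIsomorphicSetoid_eq_orbitRel]
  simp_rw [ActionGpd.card_end]
  exact MulAction.finsum_one_div_card_stabilizer_out (G := G) (F := F)
end

section
/- For a finite groupoid X, the groupoid cardinality of the 'free loop groupoid' ΛX (whose objects are pairs (x, γ) with x an object of X and γ ∈ Aut(x), and whose morphisms (x, γ) → (y, δ) are morphisms f : x → y with f ∘ γ = δ ∘ f) equals the number of isomorphism classes of objects of X: |ΛX| = |π₀X|. -/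
open CategoryTheory MulAction

/-!
Isomorphism classes of `ΛX` lying over the class of `x` correspond to conjugacy classes of
`Aut x`, and the automorphism group of `(x, γ)` is the centralizer of `γ`. Hence the classes
over `x` contribute `∑ 1 / |C(γ)| = ∑ |cl(γ)| / |Aut x|` to `|ΛX|`, which is `1` by the
orbit–stabilizer theorem and the class equation.
-/

section ConjClasses

variable {G : Type*} [Group G]

theorem ConjClasses.card_carrier_mul_card_centralizer (g : G) :
    Nat.card (ConjClasses.mk g).carrier * Nat.card (Subgroup.centralizer {g}) = Nat.card G := by
  rw [Subgroup.nat_card_centralizer_nat_card_stabilizer, ← ConjAct.orbit_eq_carrier_conjClasses,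
    ← Nat.card_prod, Nat.card_congr (orbitProdStabilizerEquivGroup (ConjAct G) g)]
  rfl

variable [Finite G]

theorem ConjClasses.one_div_card_centralizer (g : G) :
    (1 : ℚ) / Nat.card (Subgroup.centralizer {g})
      = (ConjClasses.mk g).carrier.ncard / Nat.card G := by
  rw [div_eq_div_iff (by simp [Nat.card_pos.ne']) (by simp [Nat.card_pos.ne']), one_mul,
    ← Nat.card_coe_set_eq]
  exact_mod_cast (card_carrier_mul_card_centralizer g).symm

theorem ConjClasses.sum_ncard_carrier_div_card [Fintype (ConjClasses G)] :
    ∑ c : ConjClasses G, (c.carrier.ncard : ℚ) / Nat.card G = 1 := by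
  rw [← Finset.sum_div, div_eq_one_iff_eq (by simp [Nat.card_pos.ne']),
    ← finsum_eq_sum_of_fintype]
  exact_mod_cast Group.sum_card_conj_classes_eq_card G

end ConjClasses

local notation "π₀ " Y:max => Quotient (isIsomorphicSetoid Y)

theorem CategoryTheory.Groupoid.natCard_end_out_mk {Y : Type*} [Groupoid Y] (a : Y) :
    Nat.card ((⟦a⟧ : π₀ Y).out ⟶ (⟦a⟧ : π₀ Y).out) = Nat.card (a ⟶ a) :=
  let e := (Quotient.mk_out (s := isIsomorphicSetoid Y) a).some
  Nat.card_congr (e.homCongr e)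

namespace LoopGpd

variable {X : Type*} [Groupoid X]

def forget (X : Type*) [Groupoid X] : LoopGpd X ⥤ X where
  obj a := a.pt
  map f := f.1

def endEquivCentralizer (a : LoopGpd X) : (a ⟶ a) ≃ Subgroup.centralizer {a.loop} where
  toFun f := ⟨f.1, Subgroup.mem_centralizer_singleton_iff.mpr f.2.symm⟩
  invFun u := ⟨u.1, (Subgroup.mem_centralizer_singleton_iff.mp u.2).symm⟩

def isoConj (a : LoopGpd X) {x : X} (e : x ≅ a.pt) :
    (⟨x, e.hom ≫ a.loop ≫ e.inv⟩ : LoopGpd X) ≅ a :=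
  Groupoid.isoEquivHom _ _ |>.symm ⟨e.hom, by simp⟩

theorem isIsomorphic_mk_iff_isConj {x : X} (γ δ : x ⟶ x) :
    IsIsomorphic (⟨x, γ⟩ : LoopGpd X) ⟨x, δ⟩ ↔ IsConj γ δ := by
  rw [IsIsomorphic, (Groupoid.isoEquivHom _ _).nonempty_congr, isConj_comm, isConj_iff]
  constructor
  · rintro ⟨f, hf⟩
    exact ⟨f, mul_inv_eq_of_eq_mul hf.symm⟩
  · rintro ⟨c, hc⟩
    exact ⟨⟨c, (mul_inv_eq_iff_eq_mul.mp hc).symm⟩⟩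

def classOfConjClass (x : X) : ConjClasses (x ⟶ x) → π₀ (LoopGpd X) :=
  Quotient.lift (fun γ => ⟦⟨x, γ⟩⟧) fun γ δ h =>
    Quotient.sound ((isIsomorphic_mk_iff_isConj γ δ).mpr h)

theorem bijective_classOfConjClass_sigma :
    Function.Bijective fun p : Σ d : π₀ X, ConjClasses (d.out ⟶ d.out) =>
      classOfConjClass p.1.out p.2 := by
  constructor
  · rintro ⟨d, c⟩ ⟨d', c'⟩ h
    obtain ⟨γ, rfl⟩ := ConjClasses.mk_surjective c
    obtain ⟨γ', rfl⟩ := ConjClasses.mk_surjective c'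
    obtain ⟨e⟩ := Quotient.exact h
    obtain rfl : d = d' := by
      rw [← Quotient.out_eq d, ← Quotient.out_eq d']
      exact Quotient.sound ⟨(forget X).mapIso e⟩
    exact congrArg (Sigma.mk d)
      (ConjClasses.mk_eq_mk_iff_isConj.mpr ((isIsomorphic_mk_iff_isConj γ γ').mp ⟨e⟩))
  · intro c
    obtain ⟨a, rfl⟩ := Quotient.exists_rep c
    let e := (Quotient.mk_out (s := isIsomorphicSetoid X) a.pt).some
    exact ⟨⟨⟦a.pt⟧, ConjClasses.mk (e.hom ≫ a.loop ≫ e.inv)⟩, Quotient.sound ⟨isoConj a e⟩⟩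

variable (X) in
noncomputable def isoClassEquiv : (Σ d : π₀ X, ConjClasses (d.out ⟶ d.out)) ≃ π₀ (LoopGpd X) :=
  Equiv.ofBijective _ bijective_classOfConjClass_sigma

theorem natCard_end_isoClassEquiv_out (d : π₀ X) (γ : d.out ⟶ d.out) :
    Nat.card ((isoClassEquiv X ⟨d, .mk γ⟩).out ⟶ (isoClassEquiv X ⟨d, .mk γ⟩).out)
      = Nat.card (Subgroup.centralizer {γ}) :=
  (Groupoid.natCard_end_out_mk _).trans (Nat.card_congr (endEquivCentralizer _))

end LoopGpd

/-- For a finite groupoid `X` (finitely many isomorphism classes, finite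
automorphism groups), the groupoid cardinality of the free loop groupoid `ΛX`
equals the number of isomorphism classes of `X`: `|ΛX| = |π₀X|`. -/
theorem gpdCard_loopGpd (X : Type*) [Groupoid X]
    [Finite (Quotient (isIsomorphicSetoid X))] [∀ x y : X, Finite (x ⟶ y)] :
    gpdCard (LoopGpd X) = (Nat.card (Quotient (isIsomorphicSetoid X)) : ℚ) := by
  have (x : X) : Fintype (ConjClasses (x ⟶ x)) := Fintype.ofFinite _
  have : Finite (π₀ (LoopGpd X)) := .of_equiv _ (LoopGpd.isoClassEquiv X)
  have := Fintype.ofFinite (π₀ X)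
  have := Fintype.ofFinite (π₀ (LoopGpd X))
  calc gpdCard (LoopGpd X)
      = ∑ p : Σ d : π₀ X, ConjClasses (d.out ⟶ d.out),
          (1 : ℚ) / Nat.card ((LoopGpd.isoClassEquiv X p).out ⟶
            (LoopGpd.isoClassEquiv X p).out) := by
        rw [gpdCard, finsum_eq_sum_of_fintype, ← (LoopGpd.isoClassEquiv X).sum_comp]
    _ = ∑ d : π₀ X, ∑ c : ConjClasses (d.out ⟶ d.out),
          (c.carrier.ncard : ℚ) / Nat.card (d.out ⟶ d.out) := by
        rw [Fintype.sum_sigma]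
        refine Finset.sum_congr rfl fun d _ => Finset.sum_congr rfl fun c _ => ?_
        obtain ⟨γ, rfl⟩ := ConjClasses.mk_surjective c
        rw [LoopGpd.natCard_end_isoClassEquiv_out, ConjClasses.one_div_card_centralizer]
    _ = Nat.card (π₀ X) := by simp [ConjClasses.sum_ncard_carrier_div_card]
end

section
/- For finite groupoids (groupoids with finitely many objects and finite hom-sets) X, the groupoid cardinality satisfies: for any functor p : Y → X between finite groupoids that is a fibration with fiber Y_x over (an object representing) each isomorphism class x, |Y| = ∑_{[x] ∈ π₀X} |Y_x| / |Aut(x)|. -/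
open CategoryTheory MulAction

/-- A functor of groupoids is an isofibration if every isomorphism
`p.obj y ≅ x` lifts to an isomorphism out of `y`. -/
def IsIsofibration {Y X : Type*} [Groupoid Y] [Groupoid X] (p : Y ⥤ X) : Prop :=
  ∀ (y : Y) (x : X) (e : p.obj y ≅ x), ∃ (y' : Y) (h : p.obj y' = x)
    (e' : y ≅ y'), p.map e'.hom ≫ eqToHom h = e.hom

/-- The (strict) fiber groupoid of `p : Y ⥤ X` over `x`: objects `y` with
`p.obj y = x`, morphisms those mapping to the identity of `x`. -/
def Fiber {Y X : Type*} [Groupoid Y] [Groupoid X] (p : Y ⥤ X) (x : X) :=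
  {y : Y // p.obj y = x}

instance {Y X : Type*} [Groupoid Y] [Groupoid X] (p : Y ⥤ X) (x : X) :
    Groupoid (Fiber p x) where
  Hom a b := {f : a.1 ⟶ b.1 // p.map f = eqToHom (a.2.trans b.2.symm)}
  id a := ⟨𝟙 _, by simp⟩
  comp {a b c} f g := ⟨f.1 ≫ g.1, by
    rw [Functor.map_comp, f.2, g.2, eqToHom_trans]⟩
  id_comp := by intros; apply Subtype.ext; simp
  comp_id := by intros; apply Subtype.ext; simp
  assoc := by intros; apply Subtype.ext; simp
  inv {a b} f := ⟨Groupoid.inv f.1, by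
    have h : p.map f.1 ≫ p.map (Groupoid.inv f.1) = 𝟙 _ := by
      rw [← Functor.map_comp, Groupoid.comp_inv, CategoryTheory.Functor.map_id]
    rw [f.2] at h
    calc p.map (Groupoid.inv f.1)
        = eqToHom (b.2.trans a.2.symm) ≫ eqToHom (a.2.trans b.2.symm) ≫
            p.map (Groupoid.inv f.1) := by simp
      _ = eqToHom (b.2.trans a.2.symm) := by rw [h, Category.comp_id]⟩
  inv_comp := by intros; apply Subtype.ext; simp
  comp_inv := by intros; apply Subtype.ext; simp

/-! With `starCard z` the number of morphisms out of `z`, two partitions of unity drive the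
proof: `∑_z |z ⟶ v| / starCard z = 1` (every `z` receiving a morphism from `v` has
`starCard z = starCard v`) and `∑_[c] |z ⟶ c| / |Aut c| = 1` (only the class of `z` contributes).
Inserting them and exchanging sums gives `|Z| = ∑_z 1 / starCard z`, and likewise
`|Y_x| = ∑_y |p y ⟶ x| / starCard y`; for the latter, the isofibration property identifies the
morphisms from `y` into the fiber lying over a fixed `g : p y ⟶ x` with the morphisms out of a
lift of `g` in the fiber. Summing `|Y_x| / |Aut x|` over the classes `[x]` then gives back
`∑_y 1 / starCard y = |Y|`. -/

section StarCount

variable {Z : Type*} [Groupoid Z]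

noncomputable def starCard (z : Z) : ℕ := Nat.card (Σ z' : Z, z ⟶ z')

lemma starCard_eq_of_hom {v z : Z} (f : v ⟶ z) : starCard z = starCard v :=
  Nat.card_congr (Equiv.sigmaCongrRight fun z' => (asIso f).homCongr (Iso.refl z')).symm

lemma card_hom_eq_card_aut {a b : Z} (e : a ≅ b) : Nat.card (a ⟶ b) = Nat.card (b ⟶ b) :=
  Nat.card_congr (e.homCongr (Iso.refl b))

variable [∀ a b : Z, Finite (a ⟶ b)]

lemma card_aut_pos (z : Z) : 0 < Nat.card (z ⟶ z) :=
  have : Nonempty (z ⟶ z) := ⟨𝟙 z⟩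
  Nat.card_pos

lemma finsum_card_hom_div_card_aut (z : Z) :
    ∑ᶠ c : Quotient (isIsomorphicSetoid Z),
      (Nat.card (z ⟶ c.out) : ℚ) / Nat.card (c.out ⟶ c.out) = 1 := by
  rw [finsum_eq_single _ (Quotient.mk _ z)]
  · obtain ⟨e⟩ : Nonempty (z ≅ (Quotient.mk (isIsomorphicSetoid Z) z).out) :=
      Quotient.exact (Quotient.out_eq (Quotient.mk (isIsomorphicSetoid Z) z)).symm
    rw [card_hom_eq_card_aut e]
    exact div_self (Nat.cast_ne_zero.mpr (card_aut_pos _).ne')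
  · intro c hc
    suffices IsEmpty (z ⟶ c.out) by simp
    refine ⟨fun f => hc ?_⟩
    rw [← Quotient.out_eq c]
    exact Quotient.sound ⟨(asIso f).symm⟩

variable [Fintype Z]

lemma starCard_eq_sum_card_hom (v : Z) : starCard v = ∑ z, Nat.card (v ⟶ z) :=
  Nat.card_sigma

lemma starCard_pos (z : Z) : 0 < starCard z :=
  have : Nonempty (Σ z' : Z, z ⟶ z') := ⟨⟨z, 𝟙 z⟩⟩
  Nat.card_pos

lemma sum_card_hom_div_starCard (v : Z) :
    ∑ z, (Nat.card (v ⟶ z) : ℚ) / starCard z = 1 := by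
  have hterm (z : Z) :
      (Nat.card (v ⟶ z) : ℚ) / starCard z = Nat.card (v ⟶ z) / starCard v := by
    cases isEmpty_or_nonempty (v ⟶ z) with
    | inl h => simp
    | inr h => rw [starCard_eq_of_hom h.some]
  simp_rw [hterm, ← Finset.sum_div]
  rw [← Nat.cast_sum, ← starCard_eq_sum_card_hom]
  exact div_self (Nat.cast_ne_zero.mpr (starCard_pos v).ne')

lemma sum_card_hom_to_div_starCard (v : Z) :
    ∑ z, (Nat.card (z ⟶ v) : ℚ) / starCard z = 1 := by
  simpa only [Nat.card_congr (Groupoid.invEquiv (X := v))] using sum_card_hom_div_starCard v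

lemma gpdCard_eq_sum_inv_starCard : gpdCard Z = ∑ z : Z, (starCard z : ℚ)⁻¹ := by
  have := Fintype.ofFinite (Quotient (isIsomorphicSetoid Z))
  rw [gpdCard, finsum_eq_sum_of_fintype]
  calc ∑ c : Quotient (isIsomorphicSetoid Z), (1 : ℚ) / Nat.card (c.out ⟶ c.out)
      = ∑ c : Quotient (isIsomorphicSetoid Z), ∑ z,
          (Nat.card (z ⟶ c.out) : ℚ) / starCard z / Nat.card (c.out ⟶ c.out) := by
        simp_rw [← Finset.sum_div, sum_card_hom_to_div_starCard]
    _ = ∑ z, (starCard z : ℚ)⁻¹ * ∑ c : Quotient (isIsomorphicSetoid Z),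
          (Nat.card (z ⟶ c.out) : ℚ) / Nat.card (c.out ⟶ c.out) := by
        rw [Finset.sum_comm]
        refine Finset.sum_congr rfl fun z _ => ?_
        rw [Finset.mul_sum]
        exact Finset.sum_congr rfl fun c _ => by ring
    _ = ∑ z, (starCard z : ℚ)⁻¹ := by
        simp_rw [← finsum_eq_sum_of_fintype, finsum_card_hom_div_card_aut, mul_one]

end StarCount

section Fiber

variable {Y X : Type*} [Groupoid Y] [Groupoid X] (p : Y ⥤ X)

instance [Finite Y] (x : X) : Finite (Fiber p x) :=
  inferInstanceAs (Finite {y : Y // p.obj y = x})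

instance [∀ a b : Y, Finite (a ⟶ b)] (x : X) (a b : Fiber p x) : Finite (a ⟶ b) :=
  inferInstanceAs (Finite {f : a.1 ⟶ b.1 // p.map f = eqToHom (a.2.trans b.2.symm)})

def homOverEquivFiberHom {y' : Y} {x : X} {g : p.obj y' ⟶ x} {y₀ : Fiber p x}
    (e : y' ≅ y₀.1) (he : p.map e.hom ≫ eqToHom y₀.2 = g) (y : Fiber p x) :
    {f : y' ⟶ y.1 // p.map f ≫ eqToHom y.2 = g} ≃ (y₀ ⟶ y) where
  toFun f := ⟨e.inv ≫ f.1, by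
    rw [p.map_comp, ← p.mapIso_inv, Iso.inv_comp_eq, p.mapIso_hom,
      ← cancel_mono (eqToHom y.2), f.2]
    simpa using he.symm⟩
  invFun φ := ⟨e.hom ≫ φ.1, by
    rw [p.map_comp, φ.2, Category.assoc, eqToHom_trans, he]⟩
  left_inv f := Subtype.ext (by simp)
  right_inv φ := Subtype.ext (by simp)

variable {p}

lemma IsIsofibration.exists_card_hom_over_eq (hp : IsIsofibration p) {y' : Y} {x : X}
    (g : p.obj y' ⟶ x) : ∃ y₀ : Fiber p x, ∀ y : Fiber p x,
      Nat.card {f : y' ⟶ y.1 // p.map f ≫ eqToHom y.2 = g} = Nat.card (y₀ ⟶ y) := by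
  obtain ⟨y₀, h₀, e, he⟩ := hp y' x (asIso g)
  exact ⟨⟨y₀, h₀⟩, fun y => Nat.card_congr (homOverEquivFiberHom p e he y)⟩

variable [∀ a b : Y, Finite (a ⟶ b)] [∀ a b : X, Finite (a ⟶ b)]

lemma IsIsofibration.sum_card_hom_div_starCard_fiber (hp : IsIsofibration p) (x : X)
    [Fintype (Fiber p x)] (y' : Y) :
    ∑ y : Fiber p x, (Nat.card (y' ⟶ y.1) : ℚ) / starCard y = Nat.card (p.obj y' ⟶ x) := by
  have := Fintype.ofFinite (p.obj y' ⟶ x)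
  choose y₀ hy₀ using hp.exists_card_hom_over_eq (y' := y') (x := x)
  have hsplit (y : Fiber p x) : Nat.card (y' ⟶ y.1) = ∑ g, Nat.card (y₀ g ⟶ y) := by
    rw [← Nat.card_congr (Equiv.sigmaFiberEquiv fun f : y' ⟶ y.1 => p.map f ≫ eqToHom y.2),
      Nat.card_sigma]
    exact Finset.sum_congr rfl fun g _ => hy₀ g y
  calc ∑ y : Fiber p x, (Nat.card (y' ⟶ y.1) : ℚ) / starCard y
      = ∑ g, ∑ y : Fiber p x, (Nat.card (y₀ g ⟶ y) : ℚ) / starCard y := by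
        simp_rw [hsplit, Nat.cast_sum, Finset.sum_div]
        exact Finset.sum_comm
    _ = Nat.card (p.obj y' ⟶ x) := by
        simp [sum_card_hom_div_starCard]

lemma IsIsofibration.gpdCard_fiber_eq_sum (hp : IsIsofibration p) [Fintype Y] (x : X) :
    gpdCard (Fiber p x) = ∑ y' : Y, (Nat.card (p.obj y' ⟶ x) : ℚ) / starCard y' := by
  have := Fintype.ofFinite (Fiber p x)
  calc gpdCard (Fiber p x) = ∑ y : Fiber p x, (starCard y : ℚ)⁻¹ :=
        gpdCard_eq_sum_inv_starCard
    _ = ∑ y : Fiber p x, ∑ y' : Y,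
          (Nat.card (y' ⟶ y.1) : ℚ) / starCard y' * (starCard y : ℚ)⁻¹ := by
        simp_rw [← Finset.sum_mul, sum_card_hom_to_div_starCard, one_mul]
    _ = ∑ y' : Y, (starCard y' : ℚ)⁻¹ *
          ∑ y : Fiber p x, (Nat.card (y' ⟶ y.1) : ℚ) / starCard y := by
        rw [Finset.sum_comm]
        refine Finset.sum_congr rfl fun y' _ => ?_
        rw [Finset.mul_sum]
        exact Finset.sum_congr rfl fun y _ => by ring
    _ = ∑ y' : Y, (Nat.card (p.obj y' ⟶ x) : ℚ) / starCard y' := by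
        simp_rw [hp.sum_card_hom_div_starCard_fiber, inv_mul_eq_div]

end Fiber

/-- Groupoid cardinality along an isofibration of finite groupoids:
`|Y| = ∑_{[x] ∈ π₀X} |Y_x| / |Aut(x)|`. -/
theorem gpdCard_isofibration {Y X : Type*} [Groupoid Y] [Groupoid X]
    [Finite X] [Finite Y] [∀ x y : X, Finite (x ⟶ y)]
    [∀ x y : Y, Finite (x ⟶ y)] (p : Y ⥤ X) (hp : IsIsofibration p) :
    gpdCard Y = ∑ᶠ c : Quotient (isIsomorphicSetoid X),
      gpdCard (Fiber p (Quotient.out c)) /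
        (Nat.card (Quotient.out c ⟶ Quotient.out c) : ℚ) := by
  cases nonempty_fintype Y
  have := Fintype.ofFinite (Quotient (isIsomorphicSetoid X))
  rw [gpdCard_eq_sum_inv_starCard, finsum_eq_sum_of_fintype]
  calc ∑ y : Y, (starCard y : ℚ)⁻¹
      = ∑ y : Y, (starCard y : ℚ)⁻¹ * ∑ c : Quotient (isIsomorphicSetoid X),
          (Nat.card (p.obj y ⟶ c.out) : ℚ) / Nat.card (c.out ⟶ c.out) := by
        simp_rw [← finsum_eq_sum_of_fintype, finsum_card_hom_div_card_aut, mul_one]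
    _ = ∑ c : Quotient (isIsomorphicSetoid X),
          (∑ y : Y, (Nat.card (p.obj y ⟶ c.out) : ℚ) / starCard y) /
            Nat.card (c.out ⟶ c.out) := by
        simp_rw [Finset.mul_sum, Finset.sum_div]
        rw [Finset.sum_comm]
        exact Finset.sum_congr rfl fun c _ => Finset.sum_congr rfl fun y _ => by ring
    _ = _ := by simp_rw [hp.gpdCard_fiber_eq_sum]
end
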